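/- arXiv:1909.11321 — 2 statements merged into one kernel-verified Lean document; each statement's English description precedes it below -/
import Mathlib

section
/- Applying FALCON (first a pointwise convolution with kernel P ∈ ℝ^{N×M} producing an intermediate tensor of N channels, then a depthwise convolution with kernel D ∈ ℝ^{D×D×N}) to an input I ∈ ℝ^{H×W×M} yields the same output as applying the standard convolution with kernel K defined by K_{i,j,m,n} = P_{n,m} · D_{i,j,n}. -/
/-- position of input index: h_i = (h'-1)s + i - p, with i ∈ {1,…,D} encoded as (i:ℕ)+1 -/
def convPos (s p : ℤ) (h' : ℤ) {D : ℕ} (i : Fin D) : ℤ :=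
  (h' - 1) * s + ((i : ℤ) + 1) - p

/-- FALCON (pointwise convolution with P ∈ ℝ^{N×M}, then depthwise convolution with
D ∈ ℝ^{D×D×N}) equals standard convolution with kernel K_{i,j,m,n} = P_{n,m} · D_{i,j,n}. -/
theorem falcon_eq_standard_conv
    (d M N : ℕ) (s p : ℤ)
    (P : Fin N → Fin M → ℝ)
    (Dk : Fin d → Fin d → Fin N → ℝ)
    (I : ℤ → ℤ → Fin M → ℝ)
    (h' w' : ℤ) (n : Fin N) :
    -- depthwise applied to the pointwise output O'_{h_i,w_j,n} = Σ_m P n m · I_{h_i,w_j,m}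
    (∑ i : Fin d, ∑ j : Fin d,
        Dk i j n * (∑ m : Fin M, P n m * I (convPos s p h' i) (convPos s p w' j) m))
    =
    -- standard convolution with kernel K i j m n = P n m * Dk i j n
    (∑ i : Fin d, ∑ j : Fin d, ∑ m : Fin M,
        (P n m * Dk i j n) * I (convPos s p h' i) (convPos s p w' j) m) := by
  simp only [Finset.mul_sum]; exact Finset.sum_congr rfl fun i _ => Finset.sum_congr rfl fun j _ => Finset.sum_congr rfl fun m _ => by ring
end

section
/- Applying rank-k FALCON — performing for each r = 1,…,k a pointwise convolution with kernel P^(r) ∈ ℝ^{N×M} followed by a depthwise convolution with kernel D^(r) ∈ ℝ^{D×D×N}, and summing the k outputs — is equivalent to applying standard convolution with kernel K given by K_{i,j,m,n} = Σ_{r=1}^{k} P^(r)_{n,m} · D^(r)_{i,j,n}. -/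
/-- Rank-k FALCON (sum of k pointwise-then-depthwise branches) equals standard
convolution with kernel K_{i,j,m,n} = Σ_{r=1}^{k} P^(r)_{n,m} · D^(r)_{i,j,n}. -/
theorem rankk_falcon_eq_standard_conv
    (k d M N : ℕ) (s p : ℤ)
    (P : Fin k → Fin N → Fin M → ℝ)
    (Dk : Fin k → Fin d → Fin d → Fin N → ℝ)
    (I : ℤ → ℤ → Fin M → ℝ)
    (h' w' : ℤ) (n : Fin N) :
    -- sum over the k branches, each a pointwise then depthwise convolution
    (∑ r : Fin k, ∑ i : Fin d, ∑ j : Fin d,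
        Dk r i j n *
          (∑ m : Fin M, P r n m * I (convPos s p h' i) (convPos s p w' j) m))
    =
    -- standard convolution with kernel K i j m n = Σ_r P r n m * Dk r i j n
    (∑ i : Fin d, ∑ j : Fin d, ∑ m : Fin M,
        (∑ r : Fin k, P r n m * Dk r i j n)
          * I (convPos s p h' i) (convPos s p w' j) m) := by
  rw [Finset.sum_comm]
  refine Finset.sum_congr rfl fun i _ => ?_
  rw [Finset.sum_comm]
  refine Finset.sum_congr rfl fun j _ => ?_
  simp only [Finset.mul_sum, Finset.sum_mul]
  rw [Finset.sum_comm]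
  exact Finset.sum_congr rfl fun r _ => Finset.sum_congr rfl fun m _ => by ring
end
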